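/- In a homogeneous-goods market where a set P of sellers joins the platform (becoming connected to all buyers), the optimal welfare decomposes as W(S, B, G(P)) = W(S \ P, B, G) + v̄(m'), where m' = |P| and v̄(m') is the sum of the m' largest values among buyers who do not transact in an optimal matching of S \ P to B under G (or all such buyers if fewer than m'). -/
import Mathlib


open Finset

/-- A matching between buyers `B` and sellers `S` along edges of the bipartite graph `g`:
a set of (buyer, seller) pairs using only allowed edges, with each buyer and each seller
appearing at most once. -/
def IsMatching (B S : Finset ℕ) (g : ℕ → ℕ → Prop) (M : Finset (ℕ × ℕ)) : Prop :=
  (∀ e ∈ M, e.1 ∈ B ∧ e.2 ∈ S ∧ g e.1 e.2) ∧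
  ∀ e ∈ M, ∀ e' ∈ M, e ≠ e' → e.1 ≠ e'.1 ∧ e.2 ≠ e'.2

/-- `W B S g v` is the maximum total weight of a matching between buyers `B` and sellers `S`
along edges of `g`, where the weight of edge (i, j) is `v i j`. -/
noncomputable def W (B S : Finset ℕ) (g : ℕ → ℕ → Prop) (v : ℕ → ℕ → ℝ) : ℝ :=
  sSup {x | ∃ M : Finset (ℕ × ℕ), IsMatching B S g M ∧ x = ∑ e ∈ M, v e.1 e.2}

/-- The graph `g` augmented so that every seller in `P` (the on-platform sellers) is
connected to all buyers. -/
def gPlat (g : ℕ → ℕ → Prop) (P : Finset ℕ) : ℕ → ℕ → Prop :=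
  fun i j => g i j ∨ j ∈ P

/-- `topSum v A k` is the sum of the `k` largest values `v i` over `i ∈ A`
(or of all of them if `|A| < k`), expressed as the maximum sum over subsets of
`A` of size at most `k` (for nonnegative values). -/
noncomputable def topSum (v : ℕ → ℝ) (A : Finset ℕ) (k : ℕ) : ℝ :=
  sSup {x | ∃ T ⊆ A, T.card ≤ k ∧ x = ∑ i ∈ T, v i}

/- ### Auxiliary lemmas -/

lemma matchSet_finite (B S : Finset ℕ) (g : ℕ → ℕ → Prop) (v : ℕ → ℕ → ℝ) :
    {x | ∃ M : Finset (ℕ × ℕ), IsMatching B S g M ∧ x = ∑ e ∈ M, v e.1 e.2}.Finite := by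
  classical
  apply Set.Finite.subset (((B ×ˢ S).powerset.image (fun M => ∑ e ∈ M, v e.1 e.2)).finite_toSet)
  rintro x ⟨M, hM, rfl⟩
  simp only [coe_image, Set.mem_image, mem_coe, mem_powerset]
  exact ⟨M, fun e he => mem_product.2 ⟨(hM.1 e he).1, (hM.1 e he).2.1⟩, rfl⟩

lemma empty_matching (B S : Finset ℕ) (g : ℕ → ℕ → Prop) : IsMatching B S g ∅ :=
  ⟨fun e he => absurd he (notMem_empty e), fun e he => absurd he (notMem_empty e)⟩

lemma matchSet_nonempty (B S : Finset ℕ) (g : ℕ → ℕ → Prop) (v : ℕ → ℕ → ℝ) :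
    {x | ∃ M : Finset (ℕ × ℕ), IsMatching B S g M ∧ x = ∑ e ∈ M, v e.1 e.2}.Nonempty :=
  ⟨0, ∅, empty_matching B S g, by simp⟩

lemma le_W {B S : Finset ℕ} {g : ℕ → ℕ → Prop} {v : ℕ → ℕ → ℝ} {M : Finset (ℕ × ℕ)}
    (hM : IsMatching B S g M) : ∑ e ∈ M, v e.1 e.2 ≤ W B S g v :=
  le_csSup (matchSet_finite B S g v).bddAbove ⟨M, hM, rfl⟩

lemma topSet_finite (v : ℕ → ℝ) (A : Finset ℕ) (k : ℕ) :
    {x | ∃ T ⊆ A, T.card ≤ k ∧ x = ∑ i ∈ T, v i}.Finite := by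
  classical
  apply Set.Finite.subset ((A.powerset.image (fun T => ∑ i ∈ T, v i)).finite_toSet)
  rintro x ⟨T, hT, _, rfl⟩
  simp only [coe_image, Set.mem_image, mem_coe, mem_powerset]
  exact ⟨T, hT, rfl⟩

lemma topSet_nonempty (v : ℕ → ℝ) (A : Finset ℕ) (k : ℕ) :
    {x | ∃ T ⊆ A, T.card ≤ k ∧ x = ∑ i ∈ T, v i}.Nonempty :=
  ⟨0, ∅, empty_subset A, by simp⟩

lemma le_topSum {v : ℕ → ℝ} {A : Finset ℕ} {k : ℕ} {T : Finset ℕ}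
    (hT : T ⊆ A) (hc : T.card ≤ k) : ∑ i ∈ T, v i ≤ topSum v A k :=
  le_csSup (topSet_finite v A k).bddAbove ⟨T, hT, hc, rfl⟩

lemma topSum_attained (v : ℕ → ℝ) (A : Finset ℕ) (k : ℕ) :
    ∃ T ⊆ A, T.card ≤ k ∧ topSum v A k = ∑ i ∈ T, v i :=
  Set.Nonempty.csSup_mem (topSet_nonempty v A k) (topSet_finite v A k)

/-- The crux exchange lemma: if `N` is any off-platform matching and `T` is any set of at most
`|P|` buyers unmatched by `N`, then the total value is at most the optimal off-platform welfare
plus the top-`|P|` sum over buyers unmatched by the optimal matching `M₀`. -/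
lemma crux (B S P : Finset ℕ) (g : ℕ → ℕ → Prop) (v : ℕ → ℝ)
    (M₀ : Finset (ℕ × ℕ)) (hM₀ : IsMatching B (S \ P) g M₀) :
    ∀ n (N T : Finset _), (M₀ \ N).card ≤ n →
      IsMatching B (S \ P) g N → T ⊆ B \ N.image Prod.fst → T.card ≤ P.card →
      (∑ e ∈ N, v e.1) + ∑ i ∈ T, v i
        ≤ W B (S \ P) g (fun i _ => v i) + topSum v (B \ M₀.image Prod.fst) P.card := by
  classical
  intro n
  induction n with
  | zero =>
    intro N T hn hN hTB hTc
    by_cases hTX : ∀ i ∈ T, i ∉ M₀.image Prod.fst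
    · have h1 : (∑ e ∈ N, v e.1) ≤ W B (S \ P) g (fun i _ => v i) :=
        le_W (v := fun i _ => v i) hN
      have h2 : ∑ i ∈ T, v i ≤ topSum v (B \ M₀.image Prod.fst) P.card :=
        le_topSum (fun i hi => mem_sdiff.2 ⟨(mem_sdiff.1 (hTB hi)).1, hTX i hi⟩) hTc
      linarith
    · push_neg at hTX
      obtain ⟨i, hiT, hiX₀⟩ := hTX
      obtain ⟨a, haM, ha1⟩ := mem_image.1 hiX₀
      have hiN : i ∉ N.image Prod.fst := (mem_sdiff.1 (hTB hiT)).2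
      have haN : a ∉ N := fun h => hiN (mem_image.2 ⟨a, h, ha1⟩)
      have : (M₀ \ N).Nonempty := ⟨a, mem_sdiff.2 ⟨haM, haN⟩⟩
      rw [Nat.le_zero, Finset.card_eq_zero] at hn
      rw [hn] at this
      exact absurd this (by simp)
  | succ n ih =>
    intro N T hn hN hTB hTc
    by_cases hTX : ∀ i ∈ T, i ∉ M₀.image Prod.fst
    · have h1 : (∑ e ∈ N, v e.1) ≤ W B (S \ P) g (fun i _ => v i) :=
        le_W (v := fun i _ => v i) hN
      have h2 : ∑ i ∈ T, v i ≤ topSum v (B \ M₀.image Prod.fst) P.card :=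
        le_topSum (fun i hi => mem_sdiff.2 ⟨(mem_sdiff.1 (hTB hi)).1, hTX i hi⟩) hTc
      linarith
    · push_neg at hTX
      obtain ⟨i, hiT, hiX₀⟩ := hTX
      obtain ⟨a, haM, ha1⟩ := mem_image.1 hiX₀
      subst ha1
      have hiN : a.1 ∉ N.image Prod.fst := (mem_sdiff.1 (hTB hiT)).2
      have hinotN : ∀ e' ∈ N, e'.1 ≠ a.1 := fun e' he' h => hiN (mem_image.2 ⟨e', he', h⟩)
      have haN : a ∉ N := fun h => hinotN a h rfl
      have haMN : a ∈ M₀ \ N := mem_sdiff.2 ⟨haM, haN⟩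
      obtain ⟨haB, haS, hag⟩ := hM₀.1 a haM
      by_cases hs : ∃ e ∈ N, e.2 = a.2
      · -- a's optimal seller is used by N: swap it out
        obtain ⟨e, heN, he2⟩ := hs
        have heB := hN.1 e heN
        have hea : e ≠ a := fun h => haN (h ▸ heN)
        have heM₀ : e ∉ M₀ := by
          intro h
          exact (hM₀.2 e h a haM hea).2 he2
        set N' : Finset (ℕ × ℕ) := insert a (N.erase e) with hN'def
        set T' : Finset ℕ := insert e.1 (T.erase a.1) with hT'def
        have haNe : a ∉ N.erase e := fun h => haN (mem_of_mem_erase h)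
        -- N' is a matching
        have hN' : IsMatching B (S \ P) g N' := by
          constructor
          · intro e' he'
            rcases mem_insert.1 he' with rfl | h
            · exact ⟨haB, haS, hag⟩
            · exact hN.1 e' (mem_of_mem_erase h)
          · intro e1 he1 e2 he2' hne
            rcases mem_insert.1 he1 with rfl | h1 <;> rcases mem_insert.1 he2' with rfl | h2
            · exact absurd rfl hne
            · refine ⟨fun h => hinotN e2 (mem_of_mem_erase h2) h.symm, fun h => ?_⟩
              have hne2 : e2 ≠ e := (mem_erase.1 h2).1
              exact (hN.2 e2 (mem_of_mem_erase h2) e heN hne2).2 (h.symm.trans he2.symm)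
            · refine ⟨fun h => hinotN e1 (mem_of_mem_erase h1) h, fun h => ?_⟩
              have hne1 : e1 ≠ e := (mem_erase.1 h1).1
              exact (hN.2 e1 (mem_of_mem_erase h1) e heN hne1).2 (h.trans he2.symm)
            · exact hN.2 e1 (mem_of_mem_erase h1) e2 (mem_of_mem_erase h2) hne
        -- T' is a set of buyers unmatched by N'
        have he1a : e.1 ≠ a.1 := hinotN e heN
        have hT'B : T' ⊆ B \ N'.image Prod.fst := by
          intro j hj
          rcases mem_insert.1 hj with rfl | hj'
          · refine mem_sdiff.2 ⟨heB.1, fun hmem => ?_⟩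
            obtain ⟨e', he', he'1⟩ := mem_image.1 hmem
            rcases mem_insert.1 he' with rfl | he''
            · exact he1a he'1.symm
            · have : e' ≠ e := (mem_erase.1 he'').1
              exact (hN.2 e' (mem_of_mem_erase he'') e heN this).1 he'1
          · have hjne : j ≠ a.1 := (mem_erase.1 hj').1
            have hjB := mem_sdiff.1 (hTB (mem_of_mem_erase hj'))
            refine mem_sdiff.2 ⟨hjB.1, fun hmem => ?_⟩
            obtain ⟨e', he', he'1⟩ := mem_image.1 hmem
            rcases mem_insert.1 he' with rfl | he''
            · exact hjne he'1.symm
            · exact hjB.2 (mem_image.2 ⟨e', mem_of_mem_erase he'', he'1⟩)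
        -- cardinality
        have hT'c : T'.card ≤ P.card := by
          have h1 : T'.card ≤ (T.erase a.1).card + 1 := card_insert_le _ _
          have h2 : (T.erase a.1).card + 1 = T.card := card_erase_add_one hiT
          omega
        -- measure decreases
        have hmeas : (M₀ \ N').card ≤ n := by
          have hsub : M₀ \ N' ⊆ (M₀ \ N).erase a := by
            intro e' he'
            obtain ⟨h1, h2⟩ := mem_sdiff.1 he'
            have hne'a : e' ≠ a := fun h => h2 (h ▸ mem_insert_self a _)
            have hne'e : e' ≠ e := fun h => heM₀ (h ▸ h1)
            refine mem_erase.2 ⟨hne'a, mem_sdiff.2 ⟨h1, fun h3 => ?_⟩⟩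
            exact h2 (mem_insert.2 (Or.inr (mem_erase.2 ⟨hne'e, h3⟩)))
          have h1 : (M₀ \ N').card ≤ ((M₀ \ N).erase a).card := card_le_card hsub
          have h2 : ((M₀ \ N).erase a).card < (M₀ \ N).card := card_erase_lt_of_mem haMN
          omega
        -- sums
        have hi'T : e.1 ∉ T := fun h => (mem_sdiff.1 (hTB h)).2 (mem_image.2 ⟨e, heN, rfl⟩)
        have hi'T' : e.1 ∉ T.erase a.1 := fun h => hi'T (mem_of_mem_erase h)
        have sumN' : ∑ e' ∈ N', v e'.1 = v a.1 + (∑ e' ∈ N, v e'.1 - v e.1) := by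
          rw [hN'def, sum_insert haNe, Finset.sum_erase_eq_sub heN]
        have sumT' : ∑ j ∈ T', v j = v e.1 + (∑ j ∈ T, v j - v a.1) := by
          rw [hT'def, sum_insert hi'T', Finset.sum_erase_eq_sub hiT]
        have := ih N' T' hmeas hN' hT'B hT'c
        rw [sumN', sumT'] at this
        linarith
      · -- a's optimal seller is free in N: just add a
        push_neg at hs
        set N' : Finset (ℕ × ℕ) := insert a N with hN'def
        set T' : Finset ℕ := T.erase a.1 with hT'def
        have hN' : IsMatching B (S \ P) g N' := by
          constructor
          · intro e' he'
            rcases mem_insert.1 he' with rfl | h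
            · exact ⟨haB, haS, hag⟩
            · exact hN.1 e' h
          · intro e1 he1 e2 he2' hne
            rcases mem_insert.1 he1 with rfl | h1 <;> rcases mem_insert.1 he2' with rfl | h2
            · exact absurd rfl hne
            · exact ⟨fun h => hinotN e2 h2 h.symm, fun h => hs e2 h2 h.symm⟩
            · exact ⟨hinotN e1 h1, fun h => hs e1 h1 h⟩
            · exact hN.2 e1 h1 e2 h2 hne
        have hT'B : T' ⊆ B \ N'.image Prod.fst := by
          intro j hj
          have hjne : j ≠ a.1 := (mem_erase.1 hj).1
          have hjB := mem_sdiff.1 (hTB (mem_of_mem_erase hj))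
          refine mem_sdiff.2 ⟨hjB.1, fun hmem => ?_⟩
          obtain ⟨e', he', he'1⟩ := mem_image.1 hmem
          rcases mem_insert.1 he' with rfl | he''
          · exact hjne he'1.symm
          · exact hjB.2 (mem_image.2 ⟨e', he'', he'1⟩)
        have hT'c : T'.card ≤ P.card := le_trans (card_le_card (erase_subset _ _)) hTc
        have hmeas : (M₀ \ N').card ≤ n := by
          have hsub : M₀ \ N' ⊆ (M₀ \ N).erase a := by
            intro e' he'
            obtain ⟨h1, h2⟩ := mem_sdiff.1 he'
            have hne'a : e' ≠ a := fun h => h2 (h ▸ mem_insert_self a _)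
            exact mem_erase.2 ⟨hne'a, mem_sdiff.2 ⟨h1, fun h3 => h2 (mem_insert.2 (Or.inr h3))⟩⟩
          have h1 : (M₀ \ N').card ≤ ((M₀ \ N).erase a).card := card_le_card hsub
          have h2 : ((M₀ \ N).erase a).card < (M₀ \ N).card := card_erase_lt_of_mem haMN
          omega
        have sumN' : ∑ e' ∈ N', v e'.1 = v a.1 + ∑ e' ∈ N, v e'.1 := by
          rw [hN'def, sum_insert haN]
        have sumT' : ∑ j ∈ T', v j = ∑ j ∈ T, v j - v a.1 := by
          rw [hT'def, Finset.sum_erase_eq_sub hiT]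
        have := ih N' T' hmeas hN' hT'B hT'c
        rw [sumN', sumT'] at this
        linarith

/-- Welfare decomposition in a homogeneous-goods market: if the sellers in `P` join the
platform, the optimal welfare is the off-platform optimal welfare of `S \ P` plus the sum
of the `|P|` largest values among buyers left unmatched by an optimal off-platform
matching `M₀`. -/
theorem homogeneous_welfare_decomposition (B S P : Finset ℕ) (hP : P ⊆ S)
    (g : ℕ → ℕ → Prop) (v : ℕ → ℝ) (hv : ∀ i, 0 ≤ v i)
    (M₀ : Finset (ℕ × ℕ)) (hM₀ : IsMatching B (S \ P) g M₀)
    (hopt : ∑ e ∈ M₀, v e.1 = W B (S \ P) g (fun i _ => v i)) :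
    W B S (gPlat g P) (fun i _ => v i)
      = W B (S \ P) g (fun i _ => v i)
        + topSum v (B \ M₀.image Prod.fst) P.card := by
  classical
  apply le_antisymm
  · -- upper bound
    apply csSup_le (matchSet_nonempty B S (gPlat g P) (fun i _ => v i))
    rintro x ⟨M, hM, rfl⟩
    set N : Finset (ℕ × ℕ) := M.filter (fun e => e.2 ∉ P) with hNdef
    set MP : Finset (ℕ × ℕ) := M.filter (fun e => e.2 ∈ P) with hMPdef
    have hsplit : ∑ e ∈ MP, v e.1 + ∑ e ∈ N, v e.1 = ∑ e ∈ M, v e.1 := by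
      rw [hNdef, hMPdef]
      exact sum_filter_add_sum_filter_not M (fun e => e.2 ∈ P) _
    have hNM : IsMatching B (S \ P) g N := by
      constructor
      · intro e he
        have h1 := hM.1 e (filter_subset _ _ he)
        have h2 : e.2 ∉ P := (mem_filter.1 he).2
        exact ⟨h1.1, mem_sdiff.2 ⟨h1.2.1, h2⟩, h1.2.2.resolve_right h2⟩
      · intro e he e' he' hne
        exact hM.2 e (filter_subset _ _ he) e' (filter_subset _ _ he') hne
    set T : Finset ℕ := MP.image Prod.fst with hTdef
    have hsumT : ∑ i ∈ T, v i = ∑ e ∈ MP, v e.1 := by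
      rw [hTdef]
      apply sum_image
      intro x hx y hy hxy
      by_contra hne
      exact (hM.2 x (filter_subset _ _ hx) y (filter_subset _ _ hy) hne).1 hxy
    have hT : T ⊆ B \ N.image Prod.fst := by
      intro j hj
      obtain ⟨e, he, rfl⟩ := mem_image.1 hj
      refine mem_sdiff.2 ⟨(hM.1 e (filter_subset _ _ he)).1, fun hmem => ?_⟩
      obtain ⟨e', he', he'1⟩ := mem_image.1 hmem
      have hne : e' ≠ e := by
        intro h
        subst h
        rw [hNdef, mem_filter] at he'
        rw [hMPdef, mem_filter] at he
        exact he'.2 he.2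
      exact (hM.2 e' (filter_subset _ _ he') e (filter_subset _ _ he) hne).1 he'1
    have hTc : T.card ≤ P.card := by
      have h1 : T.card ≤ MP.card := card_image_le
      have h2 : MP.card = (MP.image Prod.snd).card := by
        rw [card_image_of_injOn]
        intro x hx y hy hxy
        by_contra hne
        exact (hM.2 x (filter_subset _ _ hx) y (filter_subset _ _ hy) hne).2 hxy
      have h3 : MP.image Prod.snd ⊆ P := by
        intro j hj
        obtain ⟨e, he, rfl⟩ := mem_image.1 hj
        exact (mem_filter.1 he).2
      have h4 : (MP.image Prod.snd).card ≤ P.card := card_le_card h3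
      omega
    have := crux B S P g v M₀ hM₀ ((M₀ \ N).card) N T le_rfl hNM hT hTc
    rw [hsumT] at this
    linarith
  · -- lower bound
    obtain ⟨T, hTA, hTc, hTsum⟩ := topSum_attained v (B \ M₀.image Prod.fst) P.card
    obtain ⟨P', hP'P, hP'c⟩ := exists_subset_card_eq hTc
    let eqv := Finset.equivOfCardEq hP'c.symm
    let f : ℕ → ℕ := fun i => if h : i ∈ T then (eqv ⟨i, h⟩ : ℕ) else 0
    have hfP : ∀ i ∈ T, f i ∈ P' := by
      intro i hi
      simp only [f, dif_pos hi]
      exact (eqv ⟨i, hi⟩).2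
    have hfinj : ∀ i ∈ T, ∀ j ∈ T, f i = f j → i = j := by
      intro i hi j hj h
      simp only [f, dif_pos hi, dif_pos hj] at h
      have := eqv.injective (Subtype.ext h)
      exact congrArg Subtype.val this
    set ME : Finset (ℕ × ℕ) := T.image (fun i => (i, f i)) with hMEdef
    have hMEmem : ∀ e ∈ ME, e.1 ∈ T ∧ e.2 = f e.1 := by
      intro e he
      obtain ⟨i, hi, rfl⟩ := mem_image.1 he
      exact ⟨hi, rfl⟩
    have hdisj : Disjoint M₀ ME := by
      rw [Finset.disjoint_left]
      intro e he hme
      have h1 : e.2 ∈ S \ P := (hM₀.1 e he).2.1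
      have h2 : e.2 ∈ P := hP'P ((hMEmem e hme).2 ▸ hfP _ (hMEmem e hme).1)
      exact (mem_sdiff.1 h1).2 h2
    set M : Finset (ℕ × ℕ) := M₀ ∪ ME with hMdef
    have hMmatch : IsMatching B S (gPlat g P) M := by
      constructor
      · intro e he
        rcases mem_union.1 he with h | h
        · obtain ⟨h1, h2, h3⟩ := hM₀.1 e h
          exact ⟨h1, (sdiff_subset) h2, Or.inl h3⟩
        · obtain ⟨h1, h2⟩ := hMEmem e h
          have heB : e.1 ∈ B := (mem_sdiff.1 (hTA h1)).1
          have heP : e.2 ∈ P := hP'P (h2 ▸ hfP _ h1)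
          exact ⟨heB, hP heP, Or.inr heP⟩
      · intro e he e' he' hne
        have key : ∀ a ∈ M₀, ∀ b ∈ ME, a.1 ≠ b.1 ∧ a.2 ≠ b.2 := by
          intro a ha b hb
          obtain ⟨hb1, hb2⟩ := hMEmem b hb
          constructor
          · intro h
            exact (mem_sdiff.1 (hTA hb1)).2 (mem_image.2 ⟨a, ha, h⟩)
          · intro h
            have h1 : a.2 ∈ S \ P := (hM₀.1 a ha).2.1
            have h2 : b.2 ∈ P := hP'P (hb2 ▸ hfP _ hb1)
            exact (mem_sdiff.1 h1).2 (h ▸ h2)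
        rcases mem_union.1 he with h | h <;> rcases mem_union.1 he' with h' | h'
        · exact hM₀.2 e h e' h' hne
        · exact key e h e' h'
        · have := key e' h' e h
          exact ⟨this.1.symm, this.2.symm⟩
        · obtain ⟨h1, h2⟩ := hMEmem e h
          obtain ⟨h1', h2'⟩ := hMEmem e' h'
          have hne1 : e.1 ≠ e'.1 := by
            intro hh
            apply hne
            have : e.2 = e'.2 := by rw [h2, h2', hh]
            exact Prod.ext hh this
          refine ⟨hne1, fun hh => hne1 ?_⟩
          rw [h2, h2'] at hh
          exact hfinj _ h1 _ h1' hh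
    have hsumM : ∑ e ∈ M, v e.1 = ∑ e ∈ M₀, v e.1 + ∑ i ∈ T, v i := by
      rw [hMdef, sum_union hdisj]
      congr 1
      rw [hMEdef]
      rw [sum_image (fun x _ y _ h => congrArg Prod.fst h)]
    have hle : ∑ e ∈ M, v e.1 ≤ W B S (gPlat g P) (fun i _ => v i) :=
      le_W (v := fun i _ => v i) hMmatch
    rw [hsumM, hopt, ← hTsum] at hle
    exact hle
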